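/- Let G be a just infinite group, and let H ≤ G be a just infinite subgroup of finite index. Then every subgroup K of G containing H is just infinite. -/

import Mathlib

def ResiduallyFinite (G : Type*) [Group G] : Prop :=
  sInf {N : Subgroup G | N.Normal ∧ N.FiniteIndex} = ⊥

def JustInfinite (G : Type*) [Group G] : Prop :=
  Infinite G ∧ ResiduallyFinite G ∧
    ∀ N : Subgroup G, N.Normal → N ≠ ⊥ → N.FiniteIndex

def FinRadical (G : Type*) [Group G] : Set G :=
  { x | ∃ N : Subgroup G, N.Normal ∧ (N : Set G).Finite ∧ x ∈ N }

def VirtuallyAbelian (G : Type*) [Group G] : Prop :=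
  ∃ H : Subgroup G, H.FiniteIndex ∧ ∀ a b : H, a * b = b * a

def conjugatesSet (G : Type*) [Group G] (B : Subgroup G) : Set (Subgroup G) :=
  { C | ∃ g : G, B.map (MulAut.conj g).toMonoidHom = C }

def IsBasal (G : Type*) [Group G] (B : Subgroup G) : Prop :=
  B ≠ ⊥ ∧ (conjugatesSet G B).Finite ∧
  (∀ C ∈ conjugatesSet G B, ∀ D ∈ conjugatesSet G B, C ≠ D →
      C ⊓ D = ⊥ ∧ ∀ x ∈ C, ∀ y ∈ D, Commute x y) ∧
  iSupIndep (fun C : conjugatesSet G B => (C : Subgroup G)) ∧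
  (⨆ C ∈ conjugatesSet G B, C) = Subgroup.normalClosure (B : Set G)

/-!
A normal subgroup `N ≠ 1` of `K` with `N ⊓ H ≠ 1` has finite index, since `N ⊓ H` is a
nontrivial normal subgroup of the just infinite group `H`. If `N ⊓ H = 1`, then `N` embeds into
the finite coset space `K ⧸ H`, so every `n ∈ N` has finite order and finitely many conjugates in
`K`, hence its centralizer in `G` has finite index. By Dietzmann's lemma, which follows from
Schur's theorem (a group whose centre has finite index has finite derived subgroup), the normal
closure of `n` in `G` is then finite, hence trivial because `G` is just infinite.
-/

open Subgroup
open scoped commutatorElement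

section

variable {G : Type*} [Group G]

theorem commutatorElement_mul_mem_center_left {z : G} (hz : z ∈ center G) (g k : G) :
    ⁅g * z, k⁆ = ⁅g, k⁆ := by
  have hzk : z * k * z⁻¹ = k := by rw [← mem_center_iff.mp hz k, mul_inv_cancel_right]
  calc ⁅g * z, k⁆ = g * (z * k * z⁻¹) * g⁻¹ * k⁻¹ := by group
    _ = ⁅g, k⁆ := by rw [hzk, commutatorElement_def]

theorem commutatorElement_mul_mem_center {z w : G} (hz : z ∈ center G) (hw : w ∈ center G)
    (g h : G) : ⁅g * z, h * w⁆ = ⁅g, h⁆ := by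
  rw [commutatorElement_mul_mem_center_left hz, ← commutatorElement_inv,
    commutatorElement_mul_mem_center_left hw, commutatorElement_inv]

theorem finite_commutatorSet_of_finiteIndex_center [(center G).FiniteIndex] :
    (commutatorSet G).Finite := by
  refine (Set.finite_range fun p : (G ⧸ center G) × (G ⧸ center G) ↦ ⁅p.1.out, p.2.out⁆).subset ?_
  rintro _ ⟨g, h, rfl⟩
  obtain ⟨z, hz⟩ := QuotientGroup.mk_out_eq_mul (center G) g
  obtain ⟨w, hw⟩ := QuotientGroup.mk_out_eq_mul (center G) h
  exact ⟨(g, h), by dsimp only; rw [hz, hw, commutatorElement_mul_mem_center z.2 w.2]⟩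

theorem isMulTorsion_abelianization_of_closure_eq_top {S : Set G} (hS : closure S = ⊤)
    (hS_torsion : ∀ s ∈ S, IsOfFinOrder s) : IsMulTorsion (Abelianization G) := by
  rw [← CommGroup.torsion_eq_top_iff, eq_top_iff,
    ← map_top_of_surjective Abelianization.of QuotientGroup.mk_surjective, ← hS,
    MonoidHom.map_closure, closure_le]
  rintro _ ⟨s, hs, rfl⟩
  exact Abelianization.of.isOfFinOrder (hS_torsion s hs)

theorem finite_of_finiteIndex_center {S : Set G} (hS_fin : S.Finite) (hS : closure S = ⊤)
    (hS_torsion : ∀ s ∈ S, IsOfFinOrder s) [(center G).FiniteIndex] : Finite G := by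
  have : Finite (commutatorSet G) := finite_commutatorSet_of_finiteIndex_center.to_subtype
  have : Group.FG G := Group.fg_iff.mpr ⟨S, hS, hS_fin⟩
  have : Group.FG (Abelianization G) := inferInstanceAs (Group.FG (G ⧸ commutator G))
  have : Finite (Abelianization G) := CommGroup.finite_of_fg_isMulTorsion _
    (isMulTorsion_abelianization_of_closure_eq_top hS hS_torsion)
  exact @Finite.of_subgroup_quotient _ _ (commutator G) _ this

namespace Subgroup

theorem index_centralizer_singleton (g : G) :
    (centralizer {g}).index = (conjugatesOf g).ncard := by
  have horbit : MulAction.orbit (ConjAct G) g = conjugatesOf g := by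
    ext x
    rw [ConjAct.mem_orbit_conjAct, isConj_comm]
    rfl
  rw [centralizer_eq_comap_stabilizer, ← horbit, ← MulAction.index_stabilizer]
  exact index_comap_of_surjective _ ConjAct.toConjAct.surjective

theorem finite_conjugatesOf_iff_finiteIndex_centralizer (g : G) :
    (conjugatesOf g).Finite ↔ (centralizer {g}).FiniteIndex := by
  rw [finiteIndex_iff, index_centralizer_singleton]
  exact ⟨fun h ↦ Set.ncard_ne_zero_of_mem mem_conjugatesOf_self h, Set.finite_of_ncard_ne_zero⟩

theorem normalClosure_singleton (g : G) : normalClosure {g} = closure (conjugatesOf g) := by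
  rw [normalClosure, Group.conjugatesOfSet, Set.biUnion_singleton]

theorem normalCore_centralizer_le_centralizer_normalClosure (g : G) :
    (centralizer {g}).normalCore ≤ centralizer (normalClosure {g}) :=
  le_centralizer_iff.mpr <| normalClosure_le_normal <| Set.singleton_subset_iff.mpr fun _ h ↦
    mem_centralizer_singleton_iff.mp (normalCore_le _ h)

/-- Dietzmann's lemma for a single conjugacy class. -/
theorem finite_normalClosure_singleton {g : G} (hg : IsOfFinOrder g)
    [(centralizer {g}).FiniteIndex] : Finite (normalClosure {g}) := by
  have hcore := normalCore_centralizer_le_centralizer_normalClosure g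
  rw [normalClosure_singleton] at hcore ⊢
  have : (center (closure (conjugatesOf g))).FiniteIndex :=
    finiteIndex_of_le (H := (centralizer {g}).normalCore.subgroupOf _) fun x hx ↦
      mem_center_iff.mpr fun y ↦ Subtype.ext (mem_centralizer_iff.mp (hcore hx) y y.2)
  refine finite_of_finiteIndex_center
    (((finite_conjugatesOf_iff_finiteIndex_centralizer g).mpr ‹_›).preimage
      Subtype.val_injective.injOn) closure_closure_coe_preimage fun x hx ↦ ?_
  exact (subtype_injective _).isOfFinOrder_iff.mp (IsConj.isOfFinOrder hx hg)

theorem finiteIndex_of_relIndex_ne_zero {N K : Subgroup G} [K.FiniteIndex]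
    (h : N.relIndex K ≠ 0) : N.FiniteIndex := by
  have : (N ⊓ K).FiniteIndex := ⟨by
    rw [← relIndex_mul_index inf_le_right, inf_relIndex_right]
    exact mul_ne_zero h FiniteIndex.index_ne_zero⟩
  exact finiteIndex_of_le (inf_le_left : N ⊓ K ≤ N)

theorem finite_of_inf_eq_bot {N H : Subgroup G} [H.FiniteIndex] (h : N ⊓ H = ⊥) :
    Finite N := by
  have hcard : H.relIndex N = Nat.card N := by
    rw [relIndex, subgroupOf_eq_bot.mpr (disjoint_iff.mpr (by rwa [inf_comm])), index_bot]
  exact Nat.finite_of_card_ne_zero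
    (hcard ▸ (isFiniteRelIndex_of_finiteIndex (K := N)).relIndex_ne_zero)

theorem finiteIndex_of_inf_range_ne_bot {H : Type*} [Group H] (f : H →* G)
    [f.range.FiniteIndex] (hH : ∀ M : Subgroup H, M.Normal → M ≠ ⊥ → M.FiniteIndex)
    {N : Subgroup G} [N.Normal] (hN : N ⊓ f.range ≠ ⊥) : N.FiniteIndex := by
  have hcomap : N.comap f ≠ ⊥ := by
    contrapose! hN
    rw [eq_bot_iff]
    rintro _ ⟨hx, y, rfl⟩
    rw [show y = 1 from (mem_bot.mp (hN ▸ hx : y ∈ (⊥ : Subgroup H))), map_one]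
    exact one_mem _
  have := hH _ inferInstance hcomap
  exact finiteIndex_of_relIndex_ne_zero (index_comap N f ▸ FiniteIndex.index_ne_zero)

theorem finiteIndex_centralizer_coe {K : Subgroup G} [K.FiniteIndex] (k : K)
    [(centralizer {k}).FiniteIndex] : (centralizer {(k : G)}).FiniteIndex := by
  have hsubgroupOf : (centralizer {(k : G)}).subgroupOf K = centralizer {k} := by
    ext x
    rw [mem_subgroupOf, mem_centralizer_singleton_iff, mem_centralizer_singleton_iff]
    exact ⟨fun h ↦ Subtype.ext h, congrArg Subtype.val⟩
  refine finiteIndex_of_relIndex_ne_zero (K := K) ?_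
  rw [relIndex, hsubgroupOf]
  exact FiniteIndex.index_ne_zero

end Subgroup

theorem ResiduallyFinite.subgroup (hG : ResiduallyFinite G) (K : Subgroup G) :
    ResiduallyFinite K := by
  refine eq_bot_iff.mpr fun x hx ↦ Subtype.ext <| mem_bot.mp ?_
  rw [← hG, mem_sInf]
  rintro N ⟨hN, hN_fin⟩
  exact mem_subgroupOf.mp (mem_sInf.mp hx _ ⟨normal_subgroupOf, instFiniteIndex_subgroupOf N K⟩)

section NormalSubgroupsOfFiniteIndex

variable [Infinite G] (hG : ∀ N : Subgroup G, N.Normal → N ≠ ⊥ → N.FiniteIndex)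
include hG

theorem eq_bot_of_finite_of_normal (N : Subgroup G) [N.Normal] [Finite N] : N = ⊥ := by
  by_contra hN
  have := hG N ‹_› hN
  have := Finite.of_subgroup_quotient N
  exact not_finite G

theorem eq_one_of_isOfFinOrder_of_finiteIndex_centralizer {g : G} (hg : IsOfFinOrder g)
    [(centralizer {g}).FiniteIndex] : g = 1 := by
  have := finite_normalClosure_singleton hg
  have hbot := eq_bot_of_finite_of_normal hG (normalClosure {g})
  exact mem_bot.mp (hbot ▸ subset_normalClosure rfl)

theorem eq_bot_of_finite_of_normal_of_finiteIndex {K : Subgroup G} [K.FiniteIndex]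
    (N : Subgroup K) [N.Normal] [Finite N] : N = ⊥ := by
  refine eq_bot_iff.mpr fun n hn ↦ Subtype.ext <| mem_bot.mpr ?_
  have : (centralizer {n}).FiniteIndex := (finite_conjugatesOf_iff_finiteIndex_centralizer n).mp
    ((N : Set K).toFinite.subset (Group.conjugates_subset_normal hn))
  have := finiteIndex_centralizer_coe n
  exact eq_one_of_isOfFinOrder_of_finiteIndex_centralizer hG <|
    (K.subtype.comp N.subtype).isOfFinOrder (isOfFinOrder_of_finite (⟨n, hn⟩ : N))

end NormalSubgroupsOfFiniteIndex

end

/-- In a just infinite group, every subgroup containing a just infinite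
subgroup of finite index is just infinite. -/
theorem justInfinite_of_le {G : Type*} [Group G] (hG : JustInfinite G)
    (H : Subgroup G) (hH : H.FiniteIndex) (hji : JustInfinite H)
    (K : Subgroup G) (hle : H ≤ K) :
    JustInfinite K := by
  obtain ⟨hG_inf, hG_rf, hG_normal⟩ := hG
  obtain ⟨hH_inf, -, hH_normal⟩ := hji
  refine ⟨Infinite.of_injective _ (inclusion_injective hle), hG_rf.subgroup K, fun N hN hN_ne ↦ ?_⟩
  have : (inclusion hle).range.FiniteIndex := by rw [inclusion_range]; infer_instance
  have : K.FiniteIndex := finiteIndex_of_le hle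
  by_cases hNH : N ⊓ (inclusion hle).range = ⊥
  · have := finite_of_inf_eq_bot hNH
    exact absurd (eq_bot_of_finite_of_normal_of_finiteIndex hG_normal N) hN_ne
  · exact finiteIndex_of_inf_range_ne_bot (inclusion hle) hH_normal hNH
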